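/- arXiv:1412.3248 — 6 statements merged into one kernel-verified Lean document; each statement's English description precedes it below -/
import Mathlib

section
/- Let φ : D₂ ⥤ D₁ and ρ : D₁ ⥤ D₂ be functors together with an adjunction φ ⊣ ρ. Let W₂ be a class of morphisms of D₂ and let q₂ : D₂ ⥤ E₂ be a localization functor of D₂ with respect to W₂. Let q₁ : D₁ ⥤ E₁ be a functor admitting a right adjoint r : E₁ ⥤ D₁ which is fully faithful (equivalently, the counit q₁ ∘ r ⟶ Id is an isomorphism). Suppose given a functor φ̄ : E₂ ⥤ E₁ together with a natural isomorphism φ̄ ∘ q₂ ≅ q₁ ∘ φ. Then φ̄ admits a right adjoint, namely the composite functor r ⋙ ρ ⋙ q₂ : E₁ ⥤ E₂. -/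
/-!
Composing `φ ⊣ ρ` with `q₁ ⊣ r` and transporting along `iso` gives `q₂ ⋙ φbar ⊣ r ⋙ ρ`.
An adjunction `L ⋙ F ⊣ G` with `L` a localization descends to `F ⊣ G ⋙ L`: the counit is
unchanged, the unit `L ⟶ L ⋙ F ⋙ G ⋙ L` lifts along `L`, and both triangle identities reduce
to those of the original adjunction, the left one after testing on objects `L.obj X`.
-/

open CategoryTheory

namespace CategoryTheory.Adjunction

variable {C D E : Type*} [Category C] [Category D] [Category E]
  (L : C ⥤ D) (W : MorphismProperty C) [L.IsLocalization W] {F : D ⥤ E} {G : E ⥤ C}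

noncomputable def ofLocalizationComp (adj : L ⋙ F ⊣ G) : F ⊣ G ⋙ L :=
  mkOfUnitCounit
    { unit := Localization.liftNatTrans L W L (L ⋙ F ⋙ G ⋙ L) (𝟭 D) (F ⋙ G ⋙ L)
        (Functor.whiskerRight adj.unit L)
      counit := adj.counit
      left_triangle := Localization.natTrans_ext L W fun X => by
        simpa using adj.left_triangle_components X
      right_triangle := by
        ext B
        simp [← L.map_comp] }

end CategoryTheory.Adjunction

theorem adjunction_descends_to_localization_general
    {D₁ : Type*} [Category D₁] {D₂ : Type*} [Category D₂]
    {E₁ : Type*} [Category E₁] {E₂ : Type*} [Category E₂]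
    (φ : D₂ ⥤ D₁) (ρ : D₁ ⥤ D₂) (adj : φ ⊣ ρ)
    (W₂ : MorphismProperty D₂) (q₂ : D₂ ⥤ E₂) [q₂.IsLocalization W₂]
    (q₁ : D₁ ⥤ E₁) (r : E₁ ⥤ D₁) (adj₁ : q₁ ⊣ r)
    (φbar : E₂ ⥤ E₁) (iso : q₂ ⋙ φbar ≅ φ ⋙ q₁) :
    Nonempty (φbar ⊣ r ⋙ ρ ⋙ q₂) :=
  ⟨((adj.comp adj₁).ofNatIsoLeft iso.symm).ofLocalizationComp q₂ W₂⟩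

/-- An adjunction `φ ⊣ ρ` descends along localizations: if `q₂ : D₂ ⥤ E₂` is a localization
functor with respect to a class of morphisms `W₂`, `q₁ : D₁ ⥤ E₁` admits a fully faithful right
adjoint `r`, and `φ̄ : E₂ ⥤ E₁` is a functor with `φ̄ ∘ q₂ ≅ q₁ ∘ φ`, then `φ̄` admits a right
adjoint, namely `r ⋙ ρ ⋙ q₂`. -/
theorem adjunction_descends_to_localization
    {D₁ : Type*} [Category D₁] {D₂ : Type*} [Category D₂]
    {E₁ : Type*} [Category E₁] {E₂ : Type*} [Category E₂]
    (φ : D₂ ⥤ D₁) (ρ : D₁ ⥤ D₂) (adj : φ ⊣ ρ)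
    (W₂ : MorphismProperty D₂) (q₂ : D₂ ⥤ E₂) [q₂.IsLocalization W₂]
    (q₁ : D₁ ⥤ E₁) (r : E₁ ⥤ D₁) (adj₁ : q₁ ⊣ r) [r.Full] [r.Faithful]
    (φbar : E₂ ⥤ E₁) (iso : q₂ ⋙ φbar ≅ φ ⋙ q₁) :
    Nonempty (φbar ⊣ r ⋙ ρ ⋙ q₂) :=
  adjunction_descends_to_localization_general φ ρ adj W₂ q₂ q₁ r adj₁ φbar iso
end

section
/- Let G be a group, H ≤ G a subgroup, and K, L ≤ H two subgroups of H. Consider the set P = {(aK, bL) ∈ G⧸K × G⧸L : aH = bH} (the fibered product of the canonical projections G⧸K → G⧸H and G⧸L → G⧸H), with G acting diagonally by left multiplication. Then for any set R ⊆ H of representatives of the double cosets K\H/L, there is a G-equivariant bijection P ≃ Σ_{s ∈ R} G⧸(K ∩ sLs⁻¹), where G acts on each summand G⧸(K ∩ sLs⁻¹) by left multiplication; under this bijection the class of (K, sL) corresponds to the identity coset in the summand indexed by s. -/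
/-!
A point of the fibered product is a pair `(aK, bL)` with `a⁻¹b ∈ H`; writing `a⁻¹b = k s l` with
`s ∈ R` exhibits it as `(ak) • (K, sL)`. So the base points `(K, sL)`, `s ∈ R`, meet every
`G`-orbit, and `g • (K, sL) = g' • (K, tL)` forces `t ∈ KsL`, so each orbit contains exactly one of
them. The stabilizer of `(K, sL)` is `K ∩ sLs⁻¹`, and the orbit map identifies `G ⧸ (K ∩ sLs⁻¹)`
with the orbit.
-/

namespace Stmt1

/-- The projection `G ⧸ K → G ⧸ H` for nested subgroups `K ≤ H`. -/
def cosetProj {G : Type*} [Group G] {K H : Subgroup G} (h : K ≤ H) : G ⧸ K → G ⧸ H :=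
  Quotient.map' id fun _ _ hab =>
    QuotientGroup.leftRel_apply.mpr (h (QuotientGroup.leftRel_apply.mp hab))

theorem cosetProj_smul {G : Type*} [Group G] {K H : Subgroup G} (h : K ≤ H) (g : G)
    (x : G ⧸ K) : cosetProj h (g • x) = g • cosetProj h x := by
  induction x using Quotient.inductionOn' with
  | h a => rfl

/-- The fibered product of the projections `G ⧸ K → G ⧸ H` and `G ⧸ L → G ⧸ H`. -/
def FiberedProd {G : Type*} [Group G] (H K L : Subgroup G) (hK : K ≤ H) (hL : L ≤ H) :
    Type _ :=
  {p : (G ⧸ K) × (G ⧸ L) // cosetProj hK p.1 = cosetProj hL p.2}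

/-- The diagonal action of `G` on the fibered product. -/
instance {G : Type*} [Group G] (H K L : Subgroup G) (hK : K ≤ H) (hL : L ≤ H) :
    MulAction G (FiberedProd H K L hK hL) where
  smul g p := ⟨(g • p.val.1, g • p.val.2), by
    simp only [cosetProj_smul, p.property]⟩
  one_smul p := Subtype.ext (Prod.ext (one_smul _ _) (one_smul _ _))
  mul_smul g g' p := Subtype.ext (Prod.ext (mul_smul _ _ _) (mul_smul _ _ _))

/-- The componentwise action of `G` on a sigma type of `G`-sets. -/
instance sigmaMulAction {G : Type*} [Group G] {ι : Type*} (f : ι → Type*)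
    [∀ i, MulAction G (f i)] : MulAction G ((i : ι) × f i) where
  smul g x := ⟨x.1, g • x.2⟩
  one_smul x := by
    cases x with
    | mk i y => show Sigma.mk i ((1 : G) • y) = ⟨i, y⟩; rw [one_smul]
  mul_smul g g' x := by
    cases x with
    | mk i y => show Sigma.mk i ((g * g') • y) = ⟨i, g • g' • y⟩; rw [mul_smul]

namespace FiberedProd

variable {G : Type*} [Group G] {H K L : Subgroup G} {hK : K ≤ H} {hL : L ≤ H}

theorem val_inj {p q : FiberedProd H K L hK hL} : p.val = q.val ↔ p = q := Subtype.val_inj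

variable (hK hL) in
def basePoint {s : G} (hs : s ∈ H) : FiberedProd H K L hK hL :=
  ⟨(((1 : G) : G ⧸ K), (s : G ⧸ L)), QuotientGroup.eq.mpr (by simpa using hs)⟩

theorem smul_basePoint_val (g : G) {s : G} (hs : s ∈ H) :
    (g • basePoint hK hL hs).val = ((g : G ⧸ K), ((g * s : G) : G ⧸ L)) :=
  Prod.ext (congrArg ((↑) : G → G ⧸ K) (mul_one g)) rfl

theorem smul_basePoint_eq_smul_basePoint_iff (a b : G) {s : G} (hs : s ∈ H) :
    a • basePoint hK hL hs = b • basePoint hK hL hs ↔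
      a⁻¹ * b ∈ K ⊓ L.map (MulAut.conj s).toMonoidHom := by
  have hconj : (a * s)⁻¹ * (b * s) = s⁻¹ * (a⁻¹ * b) * s := by group
  rw [← val_inj, smul_basePoint_val, smul_basePoint_val, Prod.ext_iff, QuotientGroup.eq,
    QuotientGroup.eq, hconj, Subgroup.mem_inf, Subgroup.mem_map_equiv, MulAut.conj_symm_apply]

theorem exists_eq_mul_mul_of_smul_basePoint_eq {a b s t : G} (hs : s ∈ H) (ht : t ∈ H)
    (h : a • basePoint hK hL hs = b • basePoint hK hL ht) :
    ∃ k ∈ K, ∃ l ∈ L, t = k * s * l := by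
  rw [← val_inj, smul_basePoint_val, smul_basePoint_val, Prod.ext_iff, QuotientGroup.eq,
    QuotientGroup.eq] at h
  exact ⟨(a⁻¹ * b)⁻¹, K.inv_mem h.1, (a * s)⁻¹ * (b * t), h.2, by group⟩

theorem smul_basePoint_val_of_eq_mul_mul {a b s k l : G} (hs : s ∈ H) (hk : k ∈ K)
    (h : a⁻¹ * b = k * s * l) (hl : l ∈ L) :
    ((a * k) • basePoint hK hL hs).val = ((a : G ⧸ K), (b : G ⧸ L)) := by
  obtain rfl : b = a * (k * s * l) := by rw [← h, mul_inv_cancel_left]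
  rw [smul_basePoint_val, Prod.mk.injEq, QuotientGroup.eq, QuotientGroup.eq]
  exact ⟨by simpa using hk, by simpa [mul_assoc] using hl⟩

end FiberedProd

section DoubleCosetRepresentatives

variable {G : Type*} [Group G] {H K L : Subgroup G} (hK : K ≤ H) (hL : L ≤ H)
  {R : Set G} (hR : ∀ s ∈ R, s ∈ H)

def sigmaToFiberedProd :
    (s : R) × (G ⧸ (K ⊓ L.map (MulAut.conj (s : G)).toMonoidHom)) → FiberedProd H K L hK hL
  | ⟨s, x⟩ => Quotient.liftOn' x (· • FiberedProd.basePoint hK hL (hR s s.2)) fun a b hab =>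
      (FiberedProd.smul_basePoint_eq_smul_basePoint_iff a b _).mpr
        (QuotientGroup.leftRel_apply.mp hab)

theorem sigmaToFiberedProd_mk (s : R) (g : G) :
    sigmaToFiberedProd hK hL hR ⟨s, (g : G ⧸ (K ⊓ L.map (MulAut.conj (s : G)).toMonoidHom))⟩ =
      g • FiberedProd.basePoint hK hL (hR s s.2) :=
  rfl

theorem sigmaToFiberedProd_smul (g : G)
    (x : (s : R) × (G ⧸ (K ⊓ L.map (MulAut.conj (s : G)).toMonoidHom))) :
    sigmaToFiberedProd hK hL hR (g • x) = g • sigmaToFiberedProd hK hL hR x := by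
  obtain ⟨s, x⟩ := x
  induction x using QuotientGroup.induction_on with
  | H a => exact mul_smul g a _

theorem sigmaToFiberedProd_injective
    (hdisj : ∀ s ∈ R, ∀ t ∈ R, (∃ k ∈ K, ∃ l ∈ L, t = k * s * l) → s = t) :
    Function.Injective (sigmaToFiberedProd hK hL hR) := by
  rintro ⟨s, x⟩ ⟨t, y⟩ h
  induction x using QuotientGroup.induction_on with | H a =>
  induction y using QuotientGroup.induction_on with | H b =>
  obtain rfl : s = t := Subtype.ext <| hdisj s s.2 t t.2 <|
    FiberedProd.exists_eq_mul_mul_of_smul_basePoint_eq _ _ h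
  exact Sigma.ext rfl <| heq_of_eq <| QuotientGroup.eq.mpr <|
    (FiberedProd.smul_basePoint_eq_smul_basePoint_iff a b _).mp h

theorem sigmaToFiberedProd_surjective
    (hcover : ∀ h ∈ H, ∃ s ∈ R, ∃ k ∈ K, ∃ l ∈ L, h = k * s * l) :
    Function.Surjective (sigmaToFiberedProd hK hL hR) := by
  rintro ⟨⟨x, y⟩, hxy⟩
  induction x using QuotientGroup.induction_on with | H a =>
  induction y using QuotientGroup.induction_on with | H b =>
  obtain ⟨s, hs, k, hk, l, hl, hkl⟩ := hcover (a⁻¹ * b) (QuotientGroup.eq.mp hxy)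
  refine ⟨⟨⟨s, hs⟩, (a * k : G)⟩, ?_⟩
  rw [sigmaToFiberedProd_mk]
  exact FiberedProd.val_inj.mp (FiberedProd.smul_basePoint_val_of_eq_mul_mul _ hk hkl hl)

end DoubleCosetRepresentatives

/-- The double coset formula: for subgroups `K, L ≤ H ≤ G` and a set `R` of representatives
of the double cosets `K\H/L`, the fibered product of `G ⧸ K` and `G ⧸ L` over `G ⧸ H` is
`G`-equivariantly isomorphic to the disjoint union over `s ∈ R` of the orbits
`G ⧸ (K ∩ sLs⁻¹)`; the class of `(K, sL)` corresponds to the identity coset in the summand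
indexed by `s`. -/
theorem fiberedProd_equiv_double_cosets
    (G : Type*) [Group G] (H K L : Subgroup G) (hK : K ≤ H) (hL : L ≤ H)
    (R : Set G) (hR : ∀ s ∈ R, s ∈ H)
    (hrep : ∀ h ∈ H, ∃! s, s ∈ R ∧ ∃ k ∈ K, ∃ l ∈ L, h = k * s * l) :
    ∃ e : FiberedProd H K L hK hL ≃
        (s : R) × (G ⧸ (K ⊓ Subgroup.map (MulAut.conj (s : G)).toMonoidHom L)),
      (∀ (g : G) (p : FiberedProd H K L hK hL), e (g • p) = g • e p) ∧
      ∀ (s : R) (p : FiberedProd H K L hK hL),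
        p.val.1 = ((1 : G) : G ⧸ K) → p.val.2 = (((s : G)) : G ⧸ L) →
          e p = ⟨s, ((1 : G) : G ⧸ (K ⊓ Subgroup.map (MulAut.conj (s : G)).toMonoidHom L))⟩ := by
  have hdisj : ∀ s ∈ R, ∀ t ∈ R, (∃ k ∈ K, ∃ l ∈ L, t = k * s * l) → s = t :=
    fun s hs t ht hst =>
      (hrep t (hR t ht)).unique ⟨hs, hst⟩ ⟨ht, 1, K.one_mem, 1, L.one_mem, by group⟩
  let f := Equiv.ofBijective (sigmaToFiberedProd hK hL hR)
    ⟨sigmaToFiberedProd_injective hK hL hR hdisj,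
      sigmaToFiberedProd_surjective hK hL hR fun h hh => (hrep h hh).exists⟩
  have hf : ∀ x, f x = sigmaToFiberedProd hK hL hR x := fun _ => rfl
  refine ⟨f.symm, fun g p => f.symm_apply_eq.mpr ?_, fun s p h₁ h₂ => f.symm_apply_eq.mpr ?_⟩
  · rw [hf, sigmaToFiberedProd_smul, ← hf, f.apply_symm_apply]
  · rw [hf, sigmaToFiberedProd_mk, one_smul]
    exact FiberedProd.val_inj.mp (Prod.ext h₁ h₂)

end Stmt1
end

section
/- Let G be a group and H ≤ G a subgroup. Then the over (slice) category of the category of G-sets and G-equivariant maps over the object G⧸H is equivalent to the category of H-sets and H-equivariant maps. One direction of the equivalence sends an object p : S → G⧸H to the fiber p⁻¹(H) over the identity coset, with its natural H-action; the inverse equivalence sends an H-set T to the induced G-set G ×_H T with its canonical G-map to G⧸H induced by the projection (g, t) ↦ gH. -/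
/- A `G`-set `p : S → G ⧸ H` is recovered from its fiber `F` over the identity coset: choosing
a representative `g_s` of each coset `p s`, every `s` is `g_s • x` with `x = g_s⁻¹ • s ∈ F`, and
two such decompositions differ by an element of `H`. Hence a `G`-map is determined by its
restriction to fibers, and every `H`-map `f` of fibers extends to the `G`-map
`s ↦ g_s • f (g_s⁻¹ • s)`. Conversely the fiber of the induced `G`-set `G ×_H T → G ⧸ H` over
the identity coset is `{[1, t]} ≅ T`. -/

open CategoryTheory

universe u

namespace Stmt10

variable {G : Type u} [Group G] {H : Subgroup G}

/-- The coset space `G ⧸ H` as an object of the category of `G`-sets. -/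
def cosetObj (G : Type u) [Group G] (H : Subgroup G) : Action (Type u) (MonCat.of G) :=
  Action.ofMulAction G (G ⧸ H)

/-- The fiber over the identity coset of a `G`-map `p : S → G ⧸ H`. -/
def FiberT (p : Over (cosetObj G H)) : Type u :=
  {s : p.left.V // p.hom.hom s = ((1 : G) : G ⧸ H)}

instance (p : Over (cosetObj G H)) : SMul H (FiberT p) :=
  ⟨fun h s => ⟨p.left.ρ (h : G) s.val, by
    have hc := types_congr_hom (p.hom.comm (h : G)) s.val
    simp only [types_comp_apply] at hc
    rw [s.property] at hc
    refine hc.trans ?_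
    show (Action.ofMulAction G (G ⧸ H)).ρ (h : G) ((1 : G) : G ⧸ H) = ((1 : G) : G ⧸ H)
    rw [Action.ofMulAction_apply, MulAction.Quotient.smul_coe, smul_eq_mul, mul_one]
    exact QuotientGroup.eq.mpr (by simp [h.property])⟩⟩

/-- The natural `H`-action on the fiber of `p : S → G ⧸ H` over the identity coset. -/
instance fiberMulAction (p : Over (cosetObj G H)) : MulAction H (FiberT p) where
  one_smul s := Subtype.ext (by
    show p.left.ρ ((1 : H) : G) s.val = s.val
    rw [OneMemClass.coe_one, Action.ρ_one]
    rfl)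
  mul_smul h h' s := Subtype.ext (by
    show p.left.ρ ((h * h' : H) : G) s.val = p.left.ρ (h : G) (p.left.ρ (h' : G) s.val)
    rw [Subgroup.coe_mul, map_mul]
    rfl)

/-- The fiber functor: it sends a `G`-set over `G ⧸ H` to its fiber over the identity coset,
with its natural `H`-action. -/
def fiberFunctor (G : Type u) [Group G] (H : Subgroup G) :
    Over (cosetObj G H) ⥤ Action (Type u) (MonCat.of H) where
  obj p := Action.ofMulAction H (FiberT p)
  map {p q} u :=
    { hom := TypeCat.ofHom fun s => ⟨u.left.hom s.val, by
        have h1 : u.left.hom ≫ q.hom.hom = p.hom.hom := by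
          rw [← Action.comp_hom, Over.w u]
        have := types_congr_hom h1 s.val
        simp only [types_comp_apply] at this
        rw [this, s.property]⟩
      comm := fun h => by
        ext s
        apply Subtype.ext
        show u.left.hom (p.left.ρ ((id h : ↥H) : G) s.val)
          = q.left.ρ ((id h : ↥H) : G) (u.left.hom s.val)
        have := types_congr_hom (u.left.comm ((id h : ↥H) : G)) s.val
        simpa only [types_comp_apply] using this }
  map_id p := by
    ext s
    rfl
  map_comp {p q r} u v := by
    ext s
    rfl

instance {M : Type u} [Monoid M] (X : Action (Type u) (MonCat.of M)) : MulAction M X.V :=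
  Action.instMulAction X

lemma Action.Hom.map_smul {M : Type u} [Monoid M] {X Y : Action (Type u) (MonCat.of M)}
    (f : X ⟶ Y) (m : M) (x : X.V) : f.hom (m • x) = m • f.hom x :=
  types_congr_hom (f.comm m) x

section Fiber

def cosetMap (p : Over (cosetObj G H)) : p.left.V → G ⧸ H := p.hom.hom

lemma cosetMap_smul (p : Over (cosetObj G H)) (g : G) (s : p.left.V) :
    cosetMap p (g • s) = g • cosetMap p s :=
  Action.Hom.map_smul p.hom g s

lemma FiberT.coe_smul {p : Over (cosetObj G H)} (h : H) (x : FiberT p) :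
    (h • x).val = (h : G) • x.val := rfl

lemma FiberT.cosetMap_eq {p : Over (cosetObj G H)} (x : FiberT p) :
    cosetMap p x.val = ((1 : G) : G ⧸ H) :=
  x.property

lemma mem_of_smul_mem_fiber {p : Over (cosetObj G H)} {g : G} (x : FiberT p)
    (hg : cosetMap p (g • x.val) = ((1 : G) : G ⧸ H)) : g ∈ H := by
  rw [cosetMap_smul, x.cosetMap_eq, MulAction.Quotient.smul_coe, smul_eq_mul, mul_one] at hg
  simpa using QuotientGroup.eq.mp hg.symm

lemma out_inv_smul_eq_one (q : G ⧸ H) : q.out⁻¹ • q = ((1 : G) : G ⧸ H) := by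
  rw [inv_smul_eq_iff, MulAction.Quotient.smul_coe, smul_eq_mul, mul_one, QuotientGroup.out_eq']

noncomputable def toFiber (p : Over (cosetObj G H)) (s : p.left.V) : FiberT p :=
  ⟨(cosetMap p s).out⁻¹ • s, by
    show cosetMap p _ = _
    rw [cosetMap_smul, out_inv_smul_eq_one]⟩

lemma out_smul_toFiber (p : Over (cosetObj G H)) (s : p.left.V) :
    (cosetMap p s).out • (toFiber p s).val = s :=
  smul_inv_smul _ s

instance : (fiberFunctor G H).Faithful where
  map_injective {p q} {u v} huv := by
    have hfib (x : FiberT p) : u.left.hom x.val = v.left.hom x.val :=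
      congrArg Subtype.val (types_congr_hom (congrArg Action.Hom.hom huv) x)
    apply Over.OverMorphism.ext
    apply Action.hom_ext
    refine ConcreteCategory.hom_ext _ _ fun s => ?_
    rw [← out_smul_toFiber p s, Action.Hom.map_smul, Action.Hom.map_smul, hfib]

section Extension

variable {p q : Over (cosetObj G H)} (f : (fiberFunctor G H).obj p ⟶ (fiberFunctor G H).obj q)

def fiberMap : FiberT p → FiberT q := f.hom

lemma fiberMap_smul (h : H) (x : FiberT p) : fiberMap f (h • x) = h • fiberMap f x :=
  Action.Hom.map_smul f h x

noncomputable def extendFiberMap (s : p.left.V) : q.left.V :=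
  (cosetMap p s).out • (fiberMap f (toFiber p s)).val

lemma extendFiberMap_smul_fiber (g : G) (x : FiberT p) :
    extendFiberMap f (g • x.val) = g • (fiberMap f x).val := by
  set g' := (cosetMap p (g • x.val)).out
  have hk : g'⁻¹ * g ∈ H := mem_of_smul_mem_fiber x (by
    rw [mul_smul]; exact (toFiber p (g • x.val)).property)
  have htoFiber : toFiber p (g • x.val) = (⟨g'⁻¹ * g, hk⟩ : H) • x :=
    Subtype.ext (mul_smul _ _ _).symm
  rw [extendFiberMap, htoFiber, fiberMap_smul, FiberT.coe_smul, smul_smul, mul_inv_cancel_left]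

lemma extendFiberMap_fiber (x : FiberT p) : extendFiberMap f x.val = (fiberMap f x).val := by
  simpa only [one_smul] using extendFiberMap_smul_fiber f 1 x

lemma extendFiberMap_smul (g : G) (s : p.left.V) :
    extendFiberMap f (g • s) = g • extendFiberMap f s := by
  rw [← out_smul_toFiber p s, smul_smul, extendFiberMap_smul_fiber, extendFiberMap_smul_fiber,
    mul_smul]

lemma cosetMap_extendFiberMap (s : p.left.V) :
    cosetMap q (extendFiberMap f s) = cosetMap p s := by
  rw [← out_smul_toFiber p s, extendFiberMap_smul_fiber, cosetMap_smul, cosetMap_smul,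
    FiberT.cosetMap_eq, FiberT.cosetMap_eq]

noncomputable def extendFiberHom : p ⟶ q :=
  Over.homMk
    ⟨TypeCat.ofHom (extendFiberMap f), fun g => by ext s; exact extendFiberMap_smul f g s⟩
    (by apply Action.hom_ext; ext s; exact cosetMap_extendFiberMap f s)

end Extension

instance : (fiberFunctor G H).Full where
  map_surjective f := ⟨extendFiberHom f, Action.hom_ext _ _ <|
    ConcreteCategory.hom_ext _ _ fun x => Subtype.ext (extendFiberMap_fiber f x)⟩

end Fiber

section Induced

variable (T : Action (Type u) (MonCat.of H))

def inducedSetoid : Setoid (G × T.V) where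
  r a b := ∃ h : H, b.1 = a.1 * h ∧ a.2 = h • b.2
  iseqv.refl a := ⟨1, (mul_one _).symm, (one_smul _ _).symm⟩
  iseqv.symm := fun ⟨h, h₁, h₂⟩ =>
    ⟨h⁻¹, by rw [h₁, Subgroup.coe_inv, mul_inv_cancel_right], by rw [h₂, inv_smul_smul]⟩
  iseqv.trans := fun ⟨h, h₁, h₂⟩ ⟨h', h₁', h₂'⟩ =>
    ⟨h * h', by rw [h₁', h₁, Subgroup.coe_mul, mul_assoc], by rw [h₂, h₂', mul_smul]⟩

abbrev Induced : Type u := Quotient (inducedSetoid T)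

def Induced.mk (g : G) (t : T.V) : Induced T := Quotient.mk _ (g, t)

instance : MulAction G (Induced T) where
  smul g := Quotient.map (fun a => (g * a.1, a.2)) fun _ _ ⟨h, h₁, h₂⟩ =>
    ⟨h, by rw [h₁, mul_assoc], h₂⟩
  one_smul x := Quotient.inductionOn x fun a => congrArg (Induced.mk T · a.2) (one_mul a.1)
  mul_smul g g' x := Quotient.inductionOn x fun a =>
    congrArg (Induced.mk T · a.2) (mul_assoc g g' a.1)

lemma Induced.mk_smul (g : G) (h : H) (t : T.V) :
    Induced.mk T g (h • t) = Induced.mk T (g * h) t :=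
  Quotient.sound ⟨h, rfl, rfl⟩

def inducedProj : Induced T → G ⧸ H :=
  Quotient.lift (fun a => (a.1 : G ⧸ H)) fun _ _ ⟨h, h₁, _⟩ => by
    rw [h₁, QuotientGroup.mk_mul_of_mem _ h.2]

def inducedOver : Over (cosetObj G H) :=
  Over.mk (Y := Action.ofMulAction G (Induced T))
    ⟨TypeCat.ofHom (inducedProj T), fun g => ConcreteCategory.hom_ext _ _ fun x => by
      induction x using Quotient.inductionOn with
      | h a => exact (MulAction.Quotient.smul_coe H g a.1).symm⟩

def unitFiber (t : T.V) : FiberT (inducedOver T) := ⟨Induced.mk T 1 t, rfl⟩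

lemma unitFiber_smul (h : H) (t : T.V) : unitFiber T (h • t) = h • unitFiber T t :=
  Subtype.ext <| (Induced.mk_smul T 1 h t).trans <|
    congrArg (Induced.mk T · t) ((one_mul _).trans (mul_one _).symm)

lemma unitFiber_injective : Function.Injective (unitFiber T) := fun t t' htt' => by
  obtain ⟨h, h₁, h₂⟩ := Quotient.exact (congrArg Subtype.val htt')
  obtain rfl : h = 1 := Subtype.ext (by simpa using h₁.symm)
  simpa using h₂

lemma unitFiber_surjective : Function.Surjective (unitFiber T) := by
  rintro ⟨x, hx⟩
  induction x using Quotient.inductionOn with | h a => ?_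
  have hmem : a.1 ∈ H := by simpa using QuotientGroup.eq.mp (hx : (a.1 : G ⧸ H) = _).symm
  refine ⟨(⟨a.1, hmem⟩ : H) • a.2, Subtype.ext ?_⟩
  exact (Induced.mk_smul T 1 ⟨a.1, hmem⟩ a.2).trans
    (congrArg (Induced.mk T · a.2) (one_mul a.1))

end Induced

instance : (fiberFunctor G H).EssSurj where
  mem_essImage T := ⟨inducedOver T, ⟨(Action.mkIso (N := (fiberFunctor G H).obj (inducedOver T))
    (Equiv.ofBijective _ ⟨unitFiber_injective T, unitFiber_surjective T⟩).toIso
    fun h => by ext t; exact unitFiber_smul T h t).symm⟩⟩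

/-- For a subgroup `H ≤ G`, the slice category of `G`-sets over the coset space `G ⧸ H` is
equivalent to the category of `H`-sets, via the functor sending `p : S → G ⧸ H` to the fiber
`p⁻¹(H)` over the identity coset with its natural `H`-action (the inverse equivalence sends an
`H`-set `T` to the induced `G`-set `G ×_H T` with its canonical projection to `G ⧸ H`). -/
theorem fiberFunctor_isEquivalence (G : Type u) [Group G] (H : Subgroup G) :
    (fiberFunctor G H).IsEquivalence := {}

end Stmt10
end

section
/- Let R be a ring and let Γ₊ be the category of finite pointed sets and basepoint-preserving maps. Call a functor E : Γ₊ ⥤ Mod_R additive if for all S, S' ∈ Γ₊ the morphism E(S ∨ S') → E(S) ⊕ E(S'), whose components are induced by the two maps collapsing one wedge summand to the basepoint, is an isomorphism. For an R-module M, let T_M : Γ₊ ⥤ Mod_R be the functor with T_M(S) = ⊕_{s ∈ S∖{o}} M (the direct sum of copies of M indexed by the non-basepoint elements), where a pointed map f : S → S' sends the summand indexed by s identically to the summand indexed by f(s) if f(s) is not the basepoint, and to 0 otherwise. Then M ↦ T_M is a fully faithful functor from Mod_R to the functor category, and its essential image is exactly the full subcategory of additive functors; in particular Mod_R is equivalent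 to the category of additive functors Γ₊ ⥤ Mod_R. -/
/-!
Evaluation at `[1]₊ = {o, 1}` recovers `M` from `T_M`, and a natural transformation out of `T_M`
is determined by its component at `[1]₊`, because `T_M(S)` is spanned by the images of the maps
`[1]₊ → S` picking out the points of `S`; this makes `T` fully faithful. `T_M` is additive because
the two idempotents of `S ∨ S'` collapsing one summand induce maps summing to the identity.

Conversely, additivity forces `E([0]₊) = 0`, since the two collapses `[0]₊ ∨ [0]₊ → [0]₊`
coincide; hence `E` kills maps through the basepoint and the maps `E([1]₊) → E(S)` induced by the
points of `S` assemble to a natural transformation `T_{E([1]₊)} ⟶ E`. It is an isomorphism at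
`[1]₊`, hence, by additivity of both sides, at wedges of sets where it already is one. Since `S`
is a retract of `[1]₊ ∨ (S ∖ {s})`, induction on `|S|` shows it is an isomorphism everywhere.
-/

open CategoryTheory

universe u

namespace Stmt11

open scoped Classical

/-- The category `Γ₊` of finite pointed sets and basepoint-preserving maps. -/
abbrev FinPointed : Type (u + 1) :=
  CategoryTheory.ObjectProperty.FullSubcategory (fun P : Pointed.{u} => Finite P.X)

variable (R : Type u) [Ring R]

/-- The direct sum `⊕_{s ∈ S∖{o}} M` of copies of the module `M` indexed by the non-basepoint
elements of `S`, realized as finitely supported functions. -/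
noncomputable def TObj (M : ModuleCat.{u} R) (P : FinPointed.{u}) : ModuleCat.{u} R :=
  ModuleCat.of R ({s : P.obj.X // s ≠ P.obj.point} →₀ M)

/-- The map induced on direct sums by a pointed map `f : S → S'`: the summand indexed by `s`
is sent identically to the summand indexed by `f s` if `f s` is not the basepoint, and to `0`
otherwise. -/
noncomputable def TMap (M : ModuleCat.{u} R) {P Q : FinPointed.{u}} (f : P ⟶ Q) :
    TObj R M P ⟶ TObj R M Q :=
  ModuleCat.ofHom (Finsupp.lsum ℕ fun s =>
    if h : f.hom.toFun s.val = Q.obj.point then 0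
    else Finsupp.lsingle (⟨f.hom.toFun s.val, h⟩ : {t : Q.obj.X // t ≠ Q.obj.point}))

theorem TMap_single (M : ModuleCat.{u} R) {P Q : FinPointed.{u}} (f : P ⟶ Q)
    (a : {s : P.obj.X // s ≠ P.obj.point}) (b : M) :
    TMap R M f (Finsupp.single a b) =
      if h : f.hom.toFun a.val = Q.obj.point then 0
      else Finsupp.single (⟨f.hom.toFun a.val, h⟩ : {t : Q.obj.X // t ≠ Q.obj.point}) b := by
  rw [TMap]
  erw [Finsupp.lsum_single]
  split_ifs with h
  · rfl
  · rfl

theorem mapRange_single' {M N : ModuleCat.{u} R} (φ : M ⟶ N) {α : Type u} (a : α) (b : M) :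
    Finsupp.mapRange.linearMap φ.hom (Finsupp.single a b)
      = Finsupp.single a (φ b) := by
  rw [Finsupp.mapRange.linearMap_apply, Finsupp.mapRange_single]

/-- The functor `T_M : Γ₊ ⥤ Mod_R` associated to an `R`-module `M`. -/
noncomputable def TFunctor (M : ModuleCat.{u} R) : FinPointed.{u} ⥤ ModuleCat.{u} R where
  obj P := TObj R M P
  map f := TMap R M f
  map_id P := by
    apply ModuleCat.hom_ext
    apply Finsupp.lhom_ext
    intro a b
    show TMap R M (𝟙 P) (Finsupp.single a b) = Finsupp.single a b
    rw [TMap_single,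
      dif_neg (show ¬((𝟙 P : P ⟶ P).hom.toFun a.val = P.obj.point) from a.property)]
    rfl
  map_comp {P Q S} f g := by
    apply ModuleCat.hom_ext
    apply Finsupp.lhom_ext
    intro a b
    show TMap R M (f ≫ g) (Finsupp.single a b)
      = TMap R M g (TMap R M f (Finsupp.single a b))
    rw [TMap_single]
    by_cases h1 : f.hom.toFun a.val = Q.obj.point
    · rw [dif_pos (show (f ≫ g).hom.toFun a.val = S.obj.point by
        show g.hom.toFun (f.hom.toFun a.val) = S.obj.point
        rw [h1, g.hom.map_point]),
        TMap_single, dif_pos h1]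
      exact (map_zero (TMap R M g).hom).symm
    · rw [TMap_single, dif_neg h1, TMap_single]
      rfl

/-- `M ↦ T_M`, as a functor from `Mod_R` to the category of functors `Γ₊ ⥤ Mod_R`. -/
noncomputable def T : ModuleCat.{u} R ⥤ (FinPointed.{u} ⥤ ModuleCat.{u} R) where
  obj M := TFunctor R M
  map {M N} φ :=
    { app := fun P => (ModuleCat.ofHom (Finsupp.mapRange.linearMap φ.hom) :
        TObj R M P ⟶ TObj R N P)
      naturality := fun P Q f => by
        apply ModuleCat.hom_ext
        apply Finsupp.lhom_ext
        intro a b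
        show Finsupp.mapRange.linearMap φ.hom (TMap R M f (Finsupp.single a b))
          = TMap R N f (Finsupp.mapRange.linearMap φ.hom (Finsupp.single a b))
        rw [TMap_single, mapRange_single', TMap_single]
        split_ifs with h
        · rw [map_zero]
        · rw [mapRange_single'] }
  map_id M := by
    apply NatTrans.ext
    funext P
    apply ModuleCat.hom_ext
    apply Finsupp.lhom_ext
    intro a b
    show Finsupp.mapRange.linearMap (𝟙 M : M ⟶ M).hom (Finsupp.single a b)
      = Finsupp.single a b
    rw [mapRange_single']
    rfl
  map_comp {M N K} φ ψ := by
    apply NatTrans.ext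
    funext P
    apply ModuleCat.hom_ext
    apply Finsupp.lhom_ext
    intro a b
    show Finsupp.mapRange.linearMap (φ ≫ ψ : M ⟶ K).hom (Finsupp.single a b)
      = Finsupp.mapRange.linearMap ψ.hom
          (Finsupp.mapRange.linearMap φ.hom (Finsupp.single a b))
    rw [mapRange_single', mapRange_single', mapRange_single']
    rfl

/-- The wedge `S ∨ S'` of two finite pointed sets: the disjoint union of `S` and `S'` with
the two basepoints identified (realized inside the product `S × S'`). -/
def wedge (P Q : FinPointed.{u}) : FinPointed.{u} :=
  ⟨⟨{x : P.obj.X × Q.obj.X // x.1 = P.obj.point ∨ x.2 = Q.obj.point},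
    ⟨(P.obj.point, Q.obj.point), Or.inl rfl⟩⟩, by
      have := P.property
      have := Q.property
      exact Subtype.finite⟩

/-- The map `S ∨ S' → S` collapsing the wedge summand `S'` to the basepoint. -/
noncomputable def collapseFst (P Q : FinPointed.{u}) : wedge P Q ⟶ P :=
  ⟨⟨fun x => if x.val.2 = Q.obj.point then x.val.1 else P.obj.point, by
    show (if (Q.obj.point : Q.obj.X) = Q.obj.point then P.obj.point else P.obj.point)
      = P.obj.point
    rw [if_pos rfl]⟩⟩

/-- The map `S ∨ S' → S'` collapsing the wedge summand `S` to the basepoint. -/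
noncomputable def collapseSnd (P Q : FinPointed.{u}) : wedge P Q ⟶ Q :=
  ⟨⟨fun x => if x.val.1 = P.obj.point then x.val.2 else Q.obj.point, by
    show (if (P.obj.point : P.obj.X) = P.obj.point then Q.obj.point else Q.obj.point)
      = Q.obj.point
    rw [if_pos rfl]⟩⟩

/-- A functor `E : Γ₊ ⥤ Mod_R` is *additive* if for all finite pointed sets `S`, `S'` the map
`E(S ∨ S') → E(S) ⊕ E(S')`, whose components are induced by the two collapse maps, is an
isomorphism. -/
def IsAdditive (E : FinPointed.{u} ⥤ ModuleCat.{u} R) : Prop :=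
  ∀ P Q : FinPointed.{u}, Function.Bijective
    (fun x : E.obj (wedge P Q) =>
      (E.map (collapseFst P Q) x, E.map (collapseSnd P Q) x))

def zeroPlus : FinPointed.{u} := ⟨⟨PUnit, PUnit.unit⟩, inferInstance⟩

def onePlus : FinPointed.{u} := ⟨⟨ULift Bool, ⟨false⟩⟩, inferInstance⟩

def onePlus.one : {s : onePlus.{u}.obj.X // s ≠ onePlus.obj.point} :=
  ⟨⟨true⟩, by simp [onePlus]⟩

instance : Subsingleton {s : onePlus.{u}.obj.X // s ≠ onePlus.obj.point} where
  allEq := by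
    rintro ⟨⟨_ | _⟩, h⟩ ⟨⟨_ | _⟩, h'⟩
    all_goals first | rfl | exact absurd rfl h | exact absurd rfl h'

def toBase (P Q : FinPointed.{u}) : P ⟶ Q :=
  ⟨⟨fun _ => Q.obj.point, rfl⟩⟩

theorem eq_toBase {P Q : FinPointed.{u}} {f : P ⟶ Q} (hf : ∀ x, f.hom.toFun x = Q.obj.point) :
    f = toBase P Q :=
  ObjectProperty.hom_ext _ (Pointed.Hom.ext (funext hf))

theorem toBase_comp_toBase (P Q S : FinPointed.{u}) :
    toBase P Q ≫ toBase Q S = toBase P S := rfl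

def incl (P : FinPointed.{u}) (s : P.obj.X) : onePlus ⟶ P :=
  ⟨⟨fun x => if x.down then s else P.obj.point, rfl⟩⟩

theorem incl_one : incl onePlus.{u} onePlus.one.val = 𝟙 onePlus := by
  refine ObjectProperty.hom_ext _ (Pointed.Hom.ext (funext ?_))
  rintro ⟨_ | _⟩ <;> rfl

theorem incl_comp {P Q : FinPointed.{u}} (s : P.obj.X) (f : P ⟶ Q) :
    incl P s ≫ f = incl Q (f.hom.toFun s) := by
  refine ObjectProperty.hom_ext _ (Pointed.Hom.ext (funext ?_))
  rintro ⟨_ | _⟩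
  · exact f.hom.map_point
  · rfl

theorem incl_point (P : FinPointed.{u}) : incl P P.obj.point = toBase onePlus P :=
  eq_toBase fun _ => ite_self _

def wedgeInl (P Q : FinPointed.{u}) : P ⟶ wedge P Q :=
  ⟨⟨fun x => ⟨(x, Q.obj.point), Or.inr rfl⟩, rfl⟩⟩

def wedgeInr (P Q : FinPointed.{u}) : Q ⟶ wedge P Q :=
  ⟨⟨fun y => ⟨(P.obj.point, y), Or.inl rfl⟩, rfl⟩⟩

theorem wedgeInl_collapseFst (P Q : FinPointed.{u}) :
    wedgeInl P Q ≫ collapseFst P Q = 𝟙 P :=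
  ObjectProperty.hom_ext _ (Pointed.Hom.ext (funext fun _ => if_pos rfl))

theorem wedgeInr_collapseSnd (P Q : FinPointed.{u}) :
    wedgeInr P Q ≫ collapseSnd P Q = 𝟙 Q :=
  ObjectProperty.hom_ext _ (Pointed.Hom.ext (funext fun _ => if_pos rfl))

theorem wedgeInl_collapseSnd (P Q : FinPointed.{u}) :
    wedgeInl P Q ≫ collapseSnd P Q = toBase P Q :=
  eq_toBase fun _ => ite_self _

theorem wedgeInr_collapseFst (P Q : FinPointed.{u}) :
    wedgeInr P Q ≫ collapseFst P Q = toBase Q P :=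
  eq_toBase fun _ => ite_self _

theorem collapse_wedgeIn_cases (P Q : FinPointed.{u}) (x : (wedge P Q).obj.X) :
    ((collapseFst P Q ≫ wedgeInl P Q).hom.toFun x = x ∧
        (collapseSnd P Q ≫ wedgeInr P Q).hom.toFun x = (wedge P Q).obj.point) ∨
      ((collapseFst P Q ≫ wedgeInl P Q).hom.toFun x = (wedge P Q).obj.point ∧
        (collapseSnd P Q ≫ wedgeInr P Q).hom.toFun x = x) := by
  obtain ⟨⟨p, q⟩, hx⟩ := x
  by_cases hq : q = Q.obj.point
  · left
    subst hq
    constructor <;> apply Subtype.ext <;>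
      simp [collapseFst, collapseSnd, wedgeInl, wedgeInr, wedge]
  · right
    have hp : p = P.obj.point := hx.resolve_right hq
    subst hp
    constructor <;> apply Subtype.ext <;>
      simp [collapseFst, collapseSnd, wedgeInl, wedgeInr, wedge, hq]

def erase (P : FinPointed.{u}) (s₀ : P.obj.X) (h : s₀ ≠ P.obj.point) : FinPointed.{u} :=
  ⟨⟨{x : P.obj.X // x ≠ s₀}, ⟨P.obj.point, h.symm⟩⟩, by
    have := P.property
    exact Subtype.finite⟩

theorem card_erase_lt (P : FinPointed.{u}) (s₀ : P.obj.X) (h : s₀ ≠ P.obj.point) :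
    Nat.card (erase P s₀ h).obj.X < Nat.card P.obj.X :=
  have := P.property
  Finite.card_subtype_lt (not_not_intro rfl)

def retractOfForallEqPoint {P : FinPointed.{u}} (hP : ∀ x, x = P.obj.point) (Q : FinPointed.{u}) :
    Retract P Q where
  i := toBase P Q
  r := toBase Q P
  retract := (eq_toBase hP).symm

noncomputable def retractWedgeErase (P : FinPointed.{u}) (s₀ : P.obj.X) (h : s₀ ≠ P.obj.point) :
    Retract P (wedge onePlus (erase P s₀ h)) where
  i := ⟨⟨fun x => if hx : x = s₀ then ⟨(⟨true⟩, ⟨P.obj.point, h.symm⟩), Or.inr rfl⟩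
      else ⟨(⟨false⟩, ⟨x, hx⟩), Or.inl rfl⟩, dif_neg h.symm⟩⟩
  r := ⟨⟨fun z => if z.val.1.down then s₀ else z.val.2.val, rfl⟩⟩
  retract := by
    refine ObjectProperty.hom_ext _ (Pointed.Hom.ext (funext fun x => ?_))
    by_cases hx : x = s₀ <;> simp [hx, onePlus]

section TFunctor

variable {R} (M : ModuleCat.{u} R)

theorem TObj_hom_ext {P : FinPointed.{u}} {N : ModuleCat.{u} R} {f g : TObj R M P ⟶ N}
    (h : ∀ a b, f (Finsupp.single a b) = g (Finsupp.single a b)) : f = g :=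
  ModuleCat.hom_ext (Finsupp.lhom_ext h)

theorem TMap_toBase (P Q : FinPointed.{u}) : TMap R M (toBase P Q) = 0 :=
  TObj_hom_ext M fun a b => by
    rw [TMap_single]
    exact dif_pos rfl

theorem TMap_incl_single {P : FinPointed.{u}} (a : {s : P.obj.X // s ≠ P.obj.point}) (b : M) :
    TMap R M (incl P a.val) (Finsupp.single onePlus.one b) = Finsupp.single a b := by
  rw [TMap_single, dif_neg (show (incl P a.val).hom.toFun onePlus.one.val ≠ _ from a.property)]
  rfl

theorem TMap_add_TMap_eq_id {P : FinPointed.{u}} {e₁ e₂ : P ⟶ P}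
    (h : ∀ x, (e₁.hom.toFun x = x ∧ e₂.hom.toFun x = P.obj.point) ∨
      (e₁.hom.toFun x = P.obj.point ∧ e₂.hom.toFun x = x)) :
    TMap R M e₁ + TMap R M e₂ = 𝟙 _ :=
  TObj_hom_ext M fun a b => by
    show TMap R M e₁ (Finsupp.single a b) + TMap R M e₂ (Finsupp.single a b) = Finsupp.single a b
    rcases h a.val with ⟨h₁, h₂⟩ | ⟨h₁, h₂⟩
    · simp only [TMap_single, h₁, h₂, dif_pos, a.property]
      exact add_zero _
    · simp only [TMap_single, h₁, h₂, dif_pos, a.property]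
      exact zero_add _

noncomputable def TOnePlusIso : ((T R).obj M).obj onePlus ≅ M :=
  (Finsupp.uniqueLinearEquiv R M onePlus.one).toModuleIso

theorem TOnePlusIso_hom_single (b : M) :
    (TOnePlusIso M).hom (Finsupp.single onePlus.one b) = b :=
  Finsupp.single_eq_same

theorem TOnePlusIso_inv_apply (b : M) :
    (TOnePlusIso M).inv b = Finsupp.single onePlus.one b :=
  Finsupp.uniqueLinearEquiv_symm_apply R M onePlus.one b

end TFunctor

section Additive

variable {R}

def IsReduced (E : FinPointed.{u} ⥤ ModuleCat.{u} R) : Prop :=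
  ∀ P Q : FinPointed.{u}, E.map (toBase P Q) = 0

noncomputable def splitting (E : FinPointed.{u} ⥤ ModuleCat.{u} R) (P Q : FinPointed.{u}) :
    E.obj (wedge P Q) →ₗ[R] E.obj P × E.obj Q :=
  (E.map (collapseFst P Q)).hom.prod (E.map (collapseSnd P Q)).hom

theorem splitting_comp_app {E F : FinPointed.{u} ⥤ ModuleCat.{u} R} (η : E ⟶ F)
    (P Q : FinPointed.{u}) :
    ⇑(splitting F P Q) ∘ η.app (wedge P Q) = Prod.map (η.app P) (η.app Q) ∘ splitting E P Q :=
  funext fun x => Prod.ext (η.naturality_apply _ x).symm (η.naturality_apply _ x).symm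

theorem IsAdditive.of_iso {E F : FinPointed.{u} ⥤ ModuleCat.{u} R} (i : E ≅ F)
    (hE : IsAdditive R E) : IsAdditive R F := fun P Q => by
  have hi : ∀ S, Function.Bijective (i.hom.app S) := fun S =>
    ConcreteCategory.bijective_of_isIso (i.hom.app S)
  refine (Function.Bijective.of_comp_iff (splitting F P Q) (hi _)).mp ?_
  rw [splitting_comp_app]
  exact ((hi P).prodMap (hi Q)).comp (hE P Q)

theorem isIso_app_wedge {E F : FinPointed.{u} ⥤ ModuleCat.{u} R} (η : E ⟶ F)
    (hE : IsAdditive R E) (hF : IsAdditive R F) {P Q : FinPointed.{u}}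
    [IsIso (η.app P)] [IsIso (η.app Q)] : IsIso (η.app (wedge P Q)) := by
  rw [ConcreteCategory.isIso_iff_bijective]
  have hF' : Function.Bijective (splitting F P Q) := hF P Q
  refine (hF'.of_comp_iff' _).mp ?_
  rw [splitting_comp_app]
  exact ((ConcreteCategory.bijective_of_isIso _).prodMap
    (ConcreteCategory.bijective_of_isIso _)).comp (hE P Q)

theorem IsAdditive.isReduced {E : FinPointed.{u} ⥤ ModuleCat.{u} R} (hE : IsAdditive R E) :
    IsReduced E := by
  have hzero : ∀ x : E.obj zeroPlus, x = 0 := fun x => by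
    obtain ⟨y, hy⟩ := (hE zeroPlus zeroPlus).2 (x, 0)
    have hcollapse : collapseFst zeroPlus.{u} zeroPlus = collapseSnd zeroPlus zeroPlus :=
      (eq_toBase fun _ => rfl).trans (eq_toBase fun _ => rfl).symm
    calc x = E.map (collapseFst _ _) y := (congrArg Prod.fst hy).symm
      _ = E.map (collapseSnd _ _) y := by rw [hcollapse]
      _ = 0 := congrArg Prod.snd hy
  intro P Q
  ext x
  rw [← toBase_comp_toBase P zeroPlus Q, E.map_comp, ConcreteCategory.comp_apply,
    hzero (E.map _ x), map_zero]
  rfl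

theorem isAdditive_of_isReduced {E : FinPointed.{u} ⥤ ModuleCat.{u} R} (hE : IsReduced E)
    (h : ∀ P Q : FinPointed.{u}, E.map (collapseFst P Q ≫ wedgeInl P Q) +
      E.map (collapseSnd P Q ≫ wedgeInr P Q) = 𝟙 _) :
    IsAdditive R E := fun P Q => by
  refine Function.bijective_iff_has_inverse.mpr
    ⟨fun p => E.map (wedgeInl P Q) p.1 + E.map (wedgeInr P Q) p.2, fun x => ?_, fun p => ?_⟩
  · simpa using congrArg (fun f => f x) (h P Q)
  · simp [← ConcreteCategory.comp_apply, ← E.map_comp, wedgeInl_collapseFst,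
      wedgeInr_collapseSnd, wedgeInl_collapseSnd, wedgeInr_collapseFst, hE P Q, hE Q P]

theorem TFunctor_isAdditive (M : ModuleCat.{u} R) : IsAdditive R (TFunctor R M) :=
  isAdditive_of_isReduced (TMap_toBase M)
    fun P Q => TMap_add_TMap_eq_id M (collapse_wedgeIn_cases P Q)

end Additive

section Comparison

variable {R}

noncomputable def comparisonApp (E : FinPointed.{u} ⥤ ModuleCat.{u} R) (P : FinPointed.{u}) :
    TObj R (E.obj onePlus) P ⟶ E.obj P :=
  ModuleCat.ofHom (Finsupp.lsum ℕ fun s => (E.map (incl P s.val)).hom)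

theorem comparisonApp_single (E : FinPointed.{u} ⥤ ModuleCat.{u} R) (P : FinPointed.{u})
    (a : {s : P.obj.X // s ≠ P.obj.point}) (b : E.obj onePlus) :
    comparisonApp E P (Finsupp.single a b) = E.map (incl P a.val) b := by
  exact Finsupp.lsum_single ℕ _ a b

noncomputable def comparison (E : FinPointed.{u} ⥤ ModuleCat.{u} R) (hE : IsReduced E) :
    (T R).obj (E.obj onePlus) ⟶ E where
  app := comparisonApp E
  naturality P Q f := TObj_hom_ext _ fun a b => by
    show comparisonApp E Q (TMap R _ f (Finsupp.single a b)) =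
      E.map f (comparisonApp E P (Finsupp.single a b))
    rw [TMap_single, comparisonApp_single, ← ConcreteCategory.comp_apply, ← E.map_comp,
      incl_comp]
    split_ifs with h
    · rw [h, incl_point, hE]
      exact map_zero (comparisonApp E Q).hom
    · exact comparisonApp_single E Q _ b

theorem comparison_app_onePlus {E : FinPointed.{u} ⥤ ModuleCat.{u} R} (hE : IsReduced E) :
    (comparison E hE).app onePlus = (TOnePlusIso (E.obj onePlus)).hom :=
  TObj_hom_ext _ fun a b => by
    rw [Subsingleton.elim a onePlus.one]
    erw [comparisonApp_single, incl_one, E.map_id, TOnePlusIso_hom_single]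
    rfl

theorem isIso_comparison_app_onePlus {E : FinPointed.{u} ⥤ ModuleCat.{u} R} (hE : IsReduced E) :
    IsIso ((comparison E hE).app onePlus) := by
  rw [comparison_app_onePlus]
  exact Iso.isIso_hom _

theorem isIso_app_of_retract {E F : FinPointed.{u} ⥤ ModuleCat.{u} R} (η : E ⟶ F)
    {P W : FinPointed.{u}} (r : Retract P W) [IsIso (η.app W)] : IsIso (η.app P) :=
  (MorphismProperty.isomorphisms _).of_retract (η.retractArrowApp r) ‹_›

theorem isIso_comparison_app {E : FinPointed.{u} ⥤ ModuleCat.{u} R} (hE : IsAdditive R E)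
    (P : FinPointed.{u}) : IsIso ((comparison E hE.isReduced).app P) := by
  induction hn : Nat.card P.obj.X using Nat.strong_induction_on generalizing P with
  | _ n ih =>
  have := isIso_comparison_app_onePlus hE.isReduced
  by_cases hP : ∃ s₀, s₀ ≠ P.obj.point
  · obtain ⟨s₀, h⟩ := hP
    have := ih _ (hn ▸ card_erase_lt P s₀ h) (erase P s₀ h) rfl
    have := isIso_app_wedge (comparison E _) (TFunctor_isAdditive _) hE
      (P := onePlus) (Q := erase P s₀ h)
    exact isIso_app_of_retract _ (retractWedgeErase P s₀ h)
  · push Not at hP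
    exact isIso_app_of_retract _ (retractOfForallEqPoint hP onePlus)

end Comparison

section FullyFaithful

variable {R}

theorem T_map_app_onePlus {M N : ModuleCat.{u} R} (φ : M ⟶ N) :
    ((T R).map φ).app onePlus = (TOnePlusIso M).hom ≫ φ ≫ (TOnePlusIso N).inv :=
  TObj_hom_ext M fun a b => by
    rw [Subsingleton.elim a onePlus.one]
    erw [mapRange_single', ConcreteCategory.comp_apply, ConcreteCategory.comp_apply,
      TOnePlusIso_hom_single, TOnePlusIso_inv_apply]

theorem T_obj_hom_ext {M : ModuleCat.{u} R} {F : FinPointed.{u} ⥤ ModuleCat.{u} R}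
    {η η' : (T R).obj M ⟶ F} (h : η.app onePlus = η'.app onePlus) : η = η' := by
  ext P : 2
  refine TObj_hom_ext M fun a b => ?_
  rw [← TMap_incl_single M a b]
  erw [η.naturality_apply, η'.naturality_apply, h]

variable (R)

theorem T_faithful : (T R).Faithful where
  map_injective {M N} φ ψ h := by
    simpa [T_map_app_onePlus] using
      congrArg (fun η => (TOnePlusIso M).inv ≫ η.app onePlus ≫ (TOnePlusIso N).hom) h

theorem T_full : (T R).Full where
  map_surjective {M N} η :=
    ⟨(TOnePlusIso M).inv ≫ η.app onePlus ≫ (TOnePlusIso N).hom,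
      T_obj_hom_ext (by simp [T_map_app_onePlus])⟩

end FullyFaithful

/-- `M ↦ T_M` is a fully faithful functor from `Mod_R` to the category of functors
`Γ₊ ⥤ Mod_R`, and its essential image consists exactly of the additive functors; in
particular `Mod_R` is equivalent to the category of additive functors `Γ₊ ⥤ Mod_R`. -/
theorem T_fullyFaithful_essImage_additive :
    (T R).Faithful ∧ (T R).Full ∧
      ∀ E : FinPointed.{u} ⥤ ModuleCat.{u} R,
        (IsAdditive R E ↔ ∃ M : ModuleCat.{u} R, Nonempty ((T R).obj M ≅ E)) := by
  refine ⟨T_faithful R, T_full R, fun E => ⟨fun hE => ?_, fun ⟨M, ⟨i⟩⟩ => ?_⟩⟩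
  · have := isIso_comparison_app hE
    have := NatIso.isIso_of_isIso_app (comparison E hE.isReduced)
    exact ⟨E.obj onePlus, ⟨asIso (comparison E hE.isReduced)⟩⟩
  · exact (TFunctor_isAdditive M).of_iso i

end Stmt11
end

section
/- Let C be a small category, F : C ⥤ Cat a functor, ∫F its Grothendieck construction with projection π : ∫F ⥤ C. Fix an object c of C, let ι_c : F(c) ⥤ ∫F be the inclusion of the fiber over c, and let j_c : F(c) ⥤ (π ↓ c) be the induced functor into the comma category of π over c, sending x to the pair (x, id_c). Then: (a) j_c admits a left adjoint (sending a pair (e, f : π(e) → c) to the pushforward of e along f), so in particular j_c is a final functor; and (b) consequently, for any ring R and any functor E : ∫F ⥤ Mod_R, the canonical morphism from the colimit of ι_c ⋙ E over the fiber F(c) to the value at c of the (pointwise) left Kan extension of E along π is an isomorphism. -/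
/-!
A morphism `(e, f) ⟶ j_c x` in `π ↓ c` is a morphism of `∫F` lying over `f`, which is the same
as a morphism `(F f)(e.fiber) ⟶ x` in the fiber `F(c)`. So pushing forward along `f` is left
adjoint to `j_c`; a right adjoint is final, and restricting a diagram along a final functor does
not change its colimit.
-/

open CategoryTheory CategoryTheory.Limits

universe u

namespace Stmt12

variable {C : Type u} [SmallCategory C] (F : C ⥤ Cat.{u, u})

/-- The canonical functor from the fiber `F.obj c` of the Grothendieck construction to the
comma category of the projection `Grothendieck.forget F` over `c`, sending `x` to the pair
`(ι_c x, 𝟙 c)`. -/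
def jFiber (c : C) : F.obj c ⥤ CostructuredArrow (Grothendieck.forget F) c where
  obj x := CostructuredArrow.mk (Y := (Grothendieck.ι F c).obj x) (𝟙 c)
  map f := CostructuredArrow.homMk ((Grothendieck.ι F c).map f) (by exact Category.id_comp _)
  map_id x := by
    apply CostructuredArrow.hom_ext
    exact (Grothendieck.ι F c).map_id x
  map_comp f g := by
    apply CostructuredArrow.hom_ext
    exact (Grothendieck.ι F c).map_comp f g

section

variable {F} {c : C}

lemma left_base_of_hom_jFiber {p : CostructuredArrow (Grothendieck.forget F) c} {x : F.obj c}
    (φ : p ⟶ (jFiber F c).obj x) : φ.left.base = p.hom :=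
  (Category.comp_id _).symm.trans (CostructuredArrow.w φ)

variable (F c) in
def pushforwardHomEquiv (p : CostructuredArrow (Grothendieck.forget F) c) (x : F.obj c) :
    ((F.map p.hom).toFunctor.obj p.left.fiber ⟶ x) ≃ (p ⟶ (jFiber F c).obj x) where
  toFun g := CostructuredArrow.homMk ⟨p.hom, g⟩ (Category.comp_id _)
  invFun φ := eqToHom (congrArg (fun f => (F.map f).toFunctor.obj p.left.fiber)
    (left_base_of_hom_jFiber φ).symm) ≫ φ.left.fiber
  -- the remaining `eqToHom`s are along definitional equalities, so they reduce to identities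
  left_inv g := Category.id_comp g
  right_inv φ := by
    apply CostructuredArrow.hom_ext
    exact Grothendieck.ext _ _ (left_base_of_hom_jFiber φ).symm
      ((eqToHom_trans_assoc _ _ _).trans (Category.id_comp _))

lemma pushforwardHomEquiv_comp (p : CostructuredArrow (Grothendieck.forget F) c) {x y : F.obj c}
    (g : x ⟶ y) (h : (F.map p.hom).toFunctor.obj p.left.fiber ⟶ x) :
    pushforwardHomEquiv F c p y (h ≫ g) = pushforwardHomEquiv F c p x h ≫ (jFiber F c).map g := by
  apply CostructuredArrow.hom_ext
  refine Grothendieck.ext _ _ (Category.comp_id _).symm ?_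
  have hF : (F.map (𝟙 c)).toFunctor = 𝟭 _ := by rw [F.map_id]; rfl
  change eqToHom _ ≫ h ≫ g = eqToHom _ ≫ (F.map (𝟙 c)).toFunctor.map h ≫ eqToHom _ ≫ g
  rw [Functor.congr_hom hF h]
  simp only [CostructuredArrow.comp_left, Grothendieck.comp_base, Functor.id_obj, Functor.id_map,
    Category.assoc, eqToHom_trans_assoc, eqToHom_refl, Category.id_comp]
  exact (eqToHom_trans_assoc _ _ _).symm

variable (F c)

def pushforward : CostructuredArrow (Grothendieck.forget F) c ⥤ F.obj c :=
  Adjunction.leftAdjointOfEquiv (pushforwardHomEquiv F c) fun p _ _ g h =>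
    pushforwardHomEquiv_comp p g h

def pushforwardAdjunction : pushforward F c ⊣ jFiber F c :=
  Adjunction.adjunctionOfEquivLeft _ _

end

/-- For the Grothendieck construction `π : ∫F ⥤ C` of a functor `F : C ⥤ Cat` and an object
`c` of `C`: (a) the canonical functor `j_c : F(c) ⥤ (π ↓ c)` admits a left adjoint, sending a
pair `(e, f : π(e) ⟶ c)` to the pushforward `(F.map f).obj e.fiber`, and in particular `j_c`
is a final functor; and (b) for every ring `R` and every `E : ∫F ⥤ Mod_R`, the canonical
morphism from the colimit of `ι_c ⋙ E` over the fiber `F(c)` to the colimit over the comma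
category `(π ↓ c)` — i.e. to the value at `c` of the pointwise left Kan extension of `E`
along `π` — is an isomorphism. -/
theorem jFiber_adjoint_final_and_colimit_iso (c : C) :
    (∃ L : CostructuredArrow (Grothendieck.forget F) c ⥤ F.obj c,
        (∀ p : CostructuredArrow (Grothendieck.forget F) c,
          L.obj p = (F.map p.hom).toFunctor.obj p.left.fiber) ∧
        Nonempty (L ⊣ jFiber F c)) ∧
    (jFiber F c).Final ∧
    (jFiber F c ⋙ CostructuredArrow.proj (Grothendieck.forget F) c = Grothendieck.ι F c) ∧
    (∀ (R : Type u) [Ring R] (E : Grothendieck F ⥤ ModuleCat.{u} R),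
      IsIso (colimit.pre (CostructuredArrow.proj (Grothendieck.forget F) c ⋙ E)
        (jFiber F c))) := by
  have : (jFiber F c).Final := Functor.final_of_adjunction (pushforwardAdjunction F c)
  exact ⟨⟨pushforward F c, fun _ => rfl, ⟨pushforwardAdjunction F c⟩⟩, this, rfl,
    fun _ _ _ => inferInstance⟩

end Stmt12
end

section
/- On the abelian group A = ∏_{n ≥ 1} ℤ of sequences (a_n)_{n ≥ 1} of integers, define a multiplication by (a · b)_n = Σ_{(i,j) : lcm(i,j) = n} gcd(i, j) · a_i · b_j, where the sum runs over all pairs of positive integers (i, j) with lcm(i, j) = n (a finite sum, since i and j divide n). Then this multiplication makes A a commutative, associative, unital ring, with unit the sequence e given by e_1 = 1 and e_n = 0 for n > 1. Moreover, for the basis elements ε_i (the sequence with 1 in position i and 0 elsewhere) one has ε_i · ε_j = gcd(i, j) · ε_{lcm(i,j)}, and the triple product satisfies ε_i · ε_j · ε_k = (ijk / lcm(i,j,k)) · ε_{lcm(i,j,k)}. -/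
/-!
The mark homomorphism `ghost`, `ghost(a)_d = Σ_{i ∣ d} i a_i` (the number of points of `Σ a_i ℤ/iℤ`
fixed by `dℤ`), is additive, injective because it is triangular with nonzero diagonal, and turns
the Burnside product into the pointwise product: summing `(a · b)_n` with weight `n` over
`n ∣ d` regroups into a sum over pairs `i, j ∣ d`, and `lcm(i,j) gcd(i,j) = i j`. So every ring
axiom, and every identity between products of the `ε_i`, can be checked on marks, in the ring
`ℕ+ → ℤ`, where `ghost(ε_i)_d = i` if `i ∣ d` and `0` otherwise.
-/

namespace Stmt15

def extByZero (a : ℕ+ → ℤ) : ℕ → ℤ := fun n => if h : 0 < n then a ⟨n, h⟩ else 0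

def burnsideMul (a b : ℕ+ → ℤ) : ℕ+ → ℤ := fun n =>
  ∑ p ∈ ((n : ℕ).divisors ×ˢ (n : ℕ).divisors).filter
      (fun p => Nat.lcm p.1 p.2 = (n : ℕ)),
    (Nat.gcd p.1 p.2 : ℤ) * extByZero a p.1 * extByZero b p.2

def burnsideOne : ℕ+ → ℤ := fun n => if n = 1 then 1 else 0

def eps (i : ℕ+) : ℕ+ → ℤ := fun n => if n = i then 1 else 0

lemma extByZero_coe (a : ℕ+ → ℤ) (n : ℕ+) : extByZero a n = a n :=
  dif_pos n.pos

lemma extByZero_add (a b : ℕ+ → ℤ) : extByZero (a + b) = extByZero a + extByZero b := by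
  funext k
  by_cases hk : 0 < k
  · lift k to ℕ+ using hk
    simp only [Pi.add_apply, extByZero_coe]
  · simp [extByZero, hk]

lemma extByZero_eps (i n : ℕ+) : extByZero (eps i) n = if (n : ℕ) = i then 1 else 0 := by
  simp only [extByZero_coe, eps, PNat.coe_inj]

lemma extByZero_burnsideMul (a b : ℕ+ → ℤ) {n : ℕ+} {d : ℕ} (hn : (n : ℕ) ∈ d.divisors) :
    extByZero (burnsideMul a b) n =
      ∑ p ∈ (d.divisors ×ˢ d.divisors).filter (fun p => Nat.lcm p.1 p.2 = n),
        (Nat.gcd p.1 p.2 : ℤ) * extByZero a p.1 * extByZero b p.2 := by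
  obtain ⟨hnd, hd⟩ := Nat.mem_divisors.mp hn
  rw [extByZero_coe]
  refine Finset.sum_congr (Finset.ext fun p => ?_) fun _ _ => rfl
  simp only [Finset.mem_filter, Finset.mem_product, Nat.mem_divisors]
  constructor
  · rintro ⟨⟨⟨hi, -⟩, hj, -⟩, hl⟩
    exact ⟨⟨⟨hi.trans hnd, hd⟩, hj.trans hnd, hd⟩, hl⟩
  · rintro ⟨-, hl⟩
    exact ⟨⟨⟨hl ▸ Nat.dvd_lcm_left _ _, n.ne_zero⟩, hl ▸ Nat.dvd_lcm_right _ _, n.ne_zero⟩, hl⟩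

def ghost : (ℕ+ → ℤ) →+ (ℕ+ → ℤ) :=
  AddMonoidHom.mk' (fun a d => ∑ i ∈ (d : ℕ).divisors, (i : ℤ) * extByZero a i) fun a b => by
    funext d
    simp only [extByZero_add, Pi.add_apply, mul_add, Finset.sum_add_distrib]

lemma ghost_apply (a : ℕ+ → ℤ) (d : ℕ+) :
    ghost a d = ∑ i ∈ (d : ℕ).divisors, (i : ℤ) * extByZero a i := rfl

lemma ghost_eps (i d : ℕ+) : ghost (eps i) d = if (i : ℕ) ∣ d then (i : ℤ) else 0 := by
  have hterm : ∀ k ∈ (d : ℕ).divisors,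
      (k : ℤ) * extByZero (eps i) k = if k = i then (k : ℤ) else 0 := fun k hk => by
    lift k to ℕ+ using Nat.pos_of_mem_divisors hk
    rw [extByZero_eps, mul_ite, mul_one, mul_zero]
  rw [ghost_apply, Finset.sum_congr rfl hterm, Finset.sum_ite_eq']
  simp [Nat.mem_divisors]

lemma ghost_burnsideOne : ghost burnsideOne = 1 := by
  funext d
  rw [show burnsideOne = eps 1 from rfl, ghost_eps]
  simp

lemma ghost_burnsideMul (a b : ℕ+ → ℤ) : ghost (burnsideMul a b) = ghost a * ghost b := by
  funext d
  set D := (d : ℕ).divisors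
  have hlcm : ∀ p ∈ D ×ˢ D, Nat.lcm p.1 p.2 ∈ D := fun p hp => by
    simp only [D, Finset.mem_product, Nat.mem_divisors] at hp ⊢
    exact ⟨Nat.lcm_dvd hp.1.1 hp.2.1, hp.1.2⟩
  calc ghost (burnsideMul a b) d
      = ∑ n ∈ D, ∑ p ∈ (D ×ˢ D).filter (fun p : ℕ × ℕ => Nat.lcm p.1 p.2 = n),
          ((Nat.lcm p.1 p.2 * Nat.gcd p.1 p.2 : ℕ) : ℤ) * (extByZero a p.1 * extByZero b p.2) := by
        rw [ghost_apply]
        refine Finset.sum_congr rfl fun n hn => ?_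
        lift n to ℕ+ using Nat.pos_of_mem_divisors hn
        rw [extByZero_burnsideMul a b hn, Finset.mul_sum]
        refine Finset.sum_congr rfl fun p hp => ?_
        rw [(Finset.mem_filter.mp hp).2]
        push_cast
        ring
    _ = ∑ p ∈ D ×ˢ D, ((p.1 : ℤ) * extByZero a p.1) * ((p.2 : ℤ) * extByZero b p.2) := by
        rw [Finset.sum_fiberwise_of_maps_to hlcm]
        refine Finset.sum_congr rfl fun p _ => ?_
        rw [Nat.lcm_mul_gcd]
        push_cast
        ring
    _ = ghost a d * ghost b d := by
        rw [ghost_apply, ghost_apply, Finset.sum_mul_sum, Finset.sum_product]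

lemma ghost_injective : Function.Injective ghost := by
  refine (injective_iff_map_eq_zero ghost).2 fun a ha => funext fun d => ?_
  induction d using PNat.strongInductionOn with
  | _ d ih =>
    have hd : ghost a d = d * a d := by
      rw [ghost_apply, Finset.sum_eq_single_of_mem (d : ℕ) (Nat.mem_divisors_self _ d.ne_zero),
        extByZero_coe]
      intro i hi hne
      lift i to ℕ+ using Nat.pos_of_mem_divisors hi
      have hlt : i < d := (PNat.coe_lt_coe _ _).mp (lt_of_le_of_ne (Nat.divisor_le hi) hne)
      rw [extByZero_coe, ih i hlt, Pi.zero_apply, mul_zero]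
    rw [ha, Pi.zero_apply, eq_comm, mul_eq_zero] at hd
    exact hd.resolve_left (by exact_mod_cast d.ne_zero)

lemma burnsideMul_eps_eps (i j : ℕ+) :
    burnsideMul (eps i) (eps j) = (Nat.gcd i j : ℤ) • eps (PNat.lcm i j) := by
  refine ghost_injective (funext fun d => ?_)
  simp only [ghost_burnsideMul, map_zsmul, Pi.mul_apply, Pi.smul_apply, smul_eq_mul, ghost_eps,
    PNat.lcm_coe, ite_zero_mul_ite_zero, Nat.lcm_dvd_iff]
  split_ifs
  · exact_mod_cast (Nat.gcd_mul_lcm i j).symm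
  · rw [mul_zero]

lemma burnsideMul_burnsideMul_eps (i j k : ℕ+) :
    burnsideMul (burnsideMul (eps i) (eps j)) (eps k)
      = (((i : ℕ) * (j : ℕ) * (k : ℕ) / Nat.lcm i (Nat.lcm j k) : ℕ) : ℤ) •
          eps (PNat.lcm i (PNat.lcm j k)) := by
  have hdvd : Nat.lcm i (Nat.lcm j k) ∣ (i : ℕ) * j * k := by
    rw [mul_assoc]
    exact (Nat.lcm_dvd_mul _ _).trans (Nat.mul_dvd_mul_left _ (Nat.lcm_dvd_mul _ _))
  refine ghost_injective (funext fun d => ?_)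
  simp only [ghost_burnsideMul, map_zsmul, Pi.mul_apply, Pi.smul_apply, smul_eq_mul, ghost_eps,
    PNat.lcm_coe, ite_zero_mul_ite_zero, Nat.lcm_dvd_iff, and_assoc]
  split_ifs
  · exact_mod_cast (Nat.div_mul_cancel hdvd).symm
  · rw [mul_zero]

/-- The multiplication `(a · b)_n = Σ_{lcm(i,j)=n} gcd(i,j) a_i b_j` makes the group
`∏_{n ≥ 1} ℤ` (with pointwise addition) into a commutative, associative, unital ring with
unit `e = ε₁`; moreover `ε_i · ε_j = gcd(i,j) · ε_{lcm(i,j)}` and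
`ε_i · ε_j · ε_k = (ijk / lcm(i,j,k)) · ε_{lcm(i,j,k)}`. -/
theorem burnside_ring_structure :
    (∀ a b, burnsideMul a b = burnsideMul b a) ∧
    (∀ a b c, burnsideMul (burnsideMul a b) c = burnsideMul a (burnsideMul b c)) ∧
    (∀ a, burnsideMul burnsideOne a = a) ∧
    (∀ a, burnsideMul a burnsideOne = a) ∧
    (∀ a b c, burnsideMul (a + b) c = burnsideMul a c + burnsideMul b c) ∧
    (∀ a b c, burnsideMul a (b + c) = burnsideMul a b + burnsideMul a c) ∧
    (∀ i j : ℕ+, burnsideMul (eps i) (eps j)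
      = (Nat.gcd i j : ℤ) • eps (PNat.lcm i j)) ∧
    (∀ i j k : ℕ+, burnsideMul (burnsideMul (eps i) (eps j)) (eps k)
      = (((i : ℕ) * (j : ℕ) * (k : ℕ) / Nat.lcm i (Nat.lcm j k) : ℕ) : ℤ) •
          eps (PNat.lcm i (PNat.lcm j k))) := by
  refine ⟨fun a b => ?_, fun a b c => ?_, fun a => ?_, fun a => ?_, fun a b c => ?_,
    fun a b c => ?_, burnsideMul_eps_eps, burnsideMul_burnsideMul_eps⟩ <;>
  exact ghost_injective (by simp only [ghost_burnsideMul, ghost_burnsideOne, map_add]; ring)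

end Stmt15
end
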